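/- For all integers L ≥ M ≥ 0: sum over t ≥ 0 of q^(t^2 - M t) qbinom(L-t, t) = e_M(1/q) e_{L-M}(q) + d_M(1/q) d_{L-M}(q), as an identity of Laurent polynomials in q. -/
import Mathlib


open Finset

/-- The formal variable `q` in the field of rational functions over `ℚ`. -/
noncomputable def q : RatFunc ℚ := RatFunc.X

/-- Gaussian binomial coefficient `qbinom(N, K)` in the variable `p`;
it is `0` when `K < 0` or `K > N`. -/
noncomputable def qbin (p : RatFunc ℚ) (N K : ℤ) : RatFunc ℚ :=
  if 0 ≤ K ∧ K ≤ N then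
    (∏ j ∈ Finset.range (N - K).toNat, (1 - p ^ (K + 1 + (j : ℤ)))) /
    (∏ j ∈ Finset.range (N - K).toNat, (1 - p ^ ((j : ℤ) + 1)))
  else 0

/-- `e_L(p) = Σ_{t≥0} p^{t²} qbinom(L-t, t)` for `L ≥ 0`. -/
noncomputable def eN (p : RatFunc ℚ) (L : ℕ) : RatFunc ℚ :=
  ∑ t ∈ Finset.range (L + 1), p ^ (t ^ 2) * qbin p ((L : ℤ) - t) t

/-- `d_L(p) = Σ_{t≥0} p^{t²+t} qbinom(L-t-1, t)` for `L ≥ 0`. -/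
noncomputable def dN (p : RatFunc ℚ) (L : ℕ) : RatFunc ℚ :=
  ∑ t ∈ Finset.range (L + 1), p ^ (t ^ 2 + t) * qbin p ((L : ℤ) - t - 1) t

/- ======================= auxiliary lemmas ======================= -/

lemma q_ne_zero : q ≠ 0 := RatFunc.X_ne_zero

lemma one_sub_q_pow_ne_zero (m : ℕ) (hm : 1 ≤ m) : (1 : RatFunc ℚ) - q ^ m ≠ 0 := by
  have h1 : (1 - Polynomial.X ^ m : Polynomial ℚ) ≠ 0 := by
    intro h
    have h2 := congrArg (Polynomial.eval 0) h
    simp [zero_pow (by omega : m ≠ 0)] at h2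
  intro h
  apply h1
  apply RatFunc.algebraMap_injective ℚ
  rw [map_sub, map_one, map_pow, RatFunc.algebraMap_X, map_zero]
  exact h.symm ▸ rfl

noncomputable def qfac (m : ℕ) : RatFunc ℚ := ∏ j ∈ Finset.range m, (1 - q ^ (j + 1))

lemma qfac_ne_zero (m : ℕ) : qfac m ≠ 0 :=
  Finset.prod_ne_zero_iff.2 fun j _ => one_sub_q_pow_ne_zero (j+1) (by omega)

lemma qfac_zero : qfac 0 = 1 := Finset.prod_range_zero _

lemma qfac_succ (m : ℕ) : qfac (m + 1) = qfac m * (1 - q ^ (m + 1)) :=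
  Finset.prod_range_succ _ m

lemma qbin_den (m : ℕ) : (∏ j ∈ Finset.range m, (1 - q ^ ((j : ℤ) + 1))) = qfac m := by
  apply Finset.prod_congr rfl
  intro j _
  rw [show ((j : ℤ) + 1) = ((j + 1 : ℕ) : ℤ) by push_cast; ring, zpow_natCast]

lemma qbin_eq (n k : ℤ) (h0 : 0 ≤ k) (h1 : k ≤ n) :
    qbin q n k = qfac n.toNat / (qfac k.toNat * qfac (n - k).toNat) := by
  rw [qbin, if_pos ⟨h0, h1⟩, qbin_den]
  have hnum : qfac n.toNat =
      qfac k.toNat * ∏ j ∈ Finset.range (n - k).toNat, (1 - q ^ (k + 1 + (j : ℤ))) := by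
    have hsplit : n.toNat = k.toNat + (n - k).toNat := by omega
    rw [hsplit, qfac, Finset.prod_range_add]
    congr 1
    apply Finset.prod_congr rfl
    intro j _
    rw [show (k + 1 + (j : ℤ)) = ((k.toNat + j + 1 : ℕ) : ℤ) by push_cast; omega, zpow_natCast]
  rw [hnum]
  rw [div_eq_div_iff (qfac_ne_zero _) (mul_ne_zero (qfac_ne_zero _) (qfac_ne_zero _))]
  ring

lemma qbin_zero' (p : RatFunc ℚ) (n k : ℤ) (h : ¬ (0 ≤ k ∧ k ≤ n)) : qbin p n k = 0 := if_neg h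

lemma qbin_k_zero (n : ℤ) (h : 0 ≤ n) : qbin q n 0 = 1 := by
  rw [qbin_eq n 0 le_rfl h, show (0:ℤ).toNat = 0 from rfl, qfac_zero, one_mul, sub_zero,
    div_self (qfac_ne_zero _)]

lemma qbin_self (n : ℤ) (h : 0 ≤ n) : qbin q n n = 1 := by
  rw [qbin_eq n n h le_rfl, sub_self, show (0:ℤ).toNat = 0 from rfl, qfac_zero, mul_one,
    div_self (qfac_ne_zero _)]

lemma pascal (n k : ℤ) (h : 1 ≤ n ∨ n < k ∨ k < 0) :
    qbin q n k = qbin q (n-1) k + q ^ (n - k) * qbin q (n-1) (k-1) := by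
  rcases lt_or_ge k 0 with hk | hk
  · rw [qbin_zero' q n k (by omega), qbin_zero' q (n-1) k (by omega),
      qbin_zero' q (n-1) (k-1) (by omega)]; ring
  rcases lt_or_ge n k with hnk | hnk
  · rw [qbin_zero' q n k (by omega), qbin_zero' q (n-1) k (by omega),
      qbin_zero' q (n-1) (k-1) (by omega)]; ring
  have hn : 1 ≤ n := by omega
  rcases eq_or_lt_of_le hk with hk0 | hkpos
  · rw [← hk0, qbin_k_zero n (by omega), qbin_k_zero (n-1) (by omega),
      qbin_zero' q (n-1) (0-1) (by omega)]; ring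
  rcases eq_or_lt_of_le hnk with hkn | hkn
  · rw [hkn, qbin_self n (by omega), qbin_zero' q (n-1) n (by omega), qbin_self (n-1) (by omega),
      sub_self]
    simp
  -- 1 ≤ k ≤ n - 1
  obtain ⟨a, ha⟩ : ∃ a : ℕ, k = (a : ℤ) + 1 := ⟨(k-1).toNat, by omega⟩
  obtain ⟨b, hb⟩ : ∃ b : ℕ, n - k = (b : ℤ) + 1 := ⟨(n-k-1).toNat, by omega⟩
  rw [qbin_eq n k (by omega) (by omega), qbin_eq (n-1) k (by omega) (by omega),
    qbin_eq (n-1) (k-1) (by omega) (by omega)]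
  have h1 : n.toNat = a + 1 + (b + 1) := by omega
  have h2 : k.toNat = a + 1 := by omega
  have h3 : (n - k).toNat = b + 1 := by omega
  have h4 : (n - 1).toNat = a + 1 + b := by omega
  have h5 : (n - 1 - k).toNat = b := by omega
  have h6 : (k - 1).toNat = a := by omega
  have h7 : (n - 1 - (k - 1)).toNat = b + 1 := by omega
  have h8 : n - k = ((b+1 : ℕ) : ℤ) := by omega
  rw [h1, h2, h3, h4, h5, h6, h7, h8, zpow_natCast]
  rw [show a + 1 + (b + 1) = (a + 1 + b) + 1 by ring, qfac_succ (a+1+b), qfac_succ a,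
    qfac_succ b]
  have hA := one_sub_q_pow_ne_zero (a+1) (by omega)
  have hB := one_sub_q_pow_ne_zero (b+1) (by omega)
  have hP := qfac_ne_zero a
  have hQ := qfac_ne_zero b
  rw [mul_div_assoc']
  rw [div_add_div _ _ (mul_ne_zero (mul_ne_zero hP hA) hQ)
      (mul_ne_zero hP (mul_ne_zero hQ hB))]
  rw [div_eq_div_iff (mul_ne_zero (mul_ne_zero hP hA) (mul_ne_zero hQ hB))
      (mul_ne_zero (mul_ne_zero (mul_ne_zero hP hA) hQ) (mul_ne_zero hP (mul_ne_zero hQ hB)))]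
  ring

lemma one_sub_inv_zpow (e : ℤ) : 1 - q⁻¹ ^ e = (-q ^ (-e)) * (1 - q ^ e) := by
  rw [inv_zpow, ← zpow_neg]
  have h : q ^ (-e) * q ^ e = 1 := by
    rw [← zpow_add₀ q_ne_zero]; simp
  linear_combination -h

lemma prod_q_zpow (m : ℕ) (f : ℕ → ℤ) :
    ∏ j ∈ Finset.range m, q ^ (f j) = q ^ (∑ j ∈ Finset.range m, f j) := by
  induction m with
  | zero => simp
  | succ m ih => rw [Finset.prod_range_succ, Finset.sum_range_succ, ih, zpow_add₀ q_ne_zero]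

lemma qbin_flip (m : ℕ) (f : ℕ → ℤ) :
    ∏ j ∈ Finset.range m, (1 - q⁻¹ ^ (f j)) =
      (-1) ^ m * q ^ (∑ j ∈ Finset.range m, (-(f j))) * ∏ j ∈ Finset.range m, (1 - q ^ (f j)) := by
  calc ∏ j ∈ Finset.range m, (1 - q⁻¹ ^ (f j))
      = ∏ j ∈ Finset.range m, ((-1) * q ^ (-(f j)) * (1 - q ^ (f j))) := by
        apply Finset.prod_congr rfl; intro j _; rw [one_sub_inv_zpow]; ring
    _ = (∏ j ∈ Finset.range m, ((-1 : RatFunc ℚ) * q ^ (-(f j)))) *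
          ∏ j ∈ Finset.range m, (1 - q ^ (f j)) := Finset.prod_mul_distrib
    _ = ((∏ _j ∈ Finset.range m, (-1 : RatFunc ℚ)) * ∏ j ∈ Finset.range m, q ^ (-(f j))) *
          ∏ j ∈ Finset.range m, (1 - q ^ (f j)) := by rw [Finset.prod_mul_distrib]
    _ = _ := by rw [Finset.prod_const, prod_q_zpow, Finset.card_range]

lemma qbin_inv (n k : ℤ) : qbin q⁻¹ n k = q ^ (-(k * (n - k))) * qbin q n k := by
  by_cases hcond : 0 ≤ k ∧ k ≤ n
  · rw [qbin, if_pos hcond, qbin, if_pos hcond]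
    rw [qbin_flip _ (fun j => k + 1 + (j : ℤ)), qbin_flip _ (fun j => (j : ℤ) + 1)]
    rw [mul_div_mul_comm]
    have hm : (((n - k).toNat : ℤ)) = n - k := Int.toNat_of_nonneg (by omega)
    have hexp : (∑ j ∈ Finset.range (n - k).toNat, (-(k + 1 + (j : ℤ)))) -
        (∑ j ∈ Finset.range (n - k).toNat, (-((j : ℤ) + 1))) = -(k * (n - k)) := by
      rw [← Finset.sum_sub_distrib]
      have : ∀ j ∈ Finset.range (n-k).toNat, (-(k + 1 + (j : ℤ))) - (-((j : ℤ) + 1)) = -k :=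
        fun j _ => by ring
      rw [Finset.sum_congr rfl this, Finset.sum_const, Finset.card_range, nsmul_eq_mul, hm]
      ring
    have hne : ((-1 : RatFunc ℚ)) ^ (n - k).toNat ≠ 0 := by
      apply pow_ne_zero; norm_num
    rw [mul_div_mul_left _ _ hne, ← zpow_sub₀ q_ne_zero, hexp]
  · rw [qbin_zero' _ _ _ hcond, qbin_zero' _ _ _ hcond, mul_zero]

/- ======================= the sum family G ======================= -/

noncomputable def G (a c : ℤ) (L : ℕ) : RatFunc ℚ :=
  ∑ t ∈ Finset.range (L + 1), q ^ ((t : ℤ) ^ 2 + a * t) * qbin q ((L : ℤ) + c - t) t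

lemma Gshift (a : ℤ) (L : ℕ) : G a (-1) (L + 1) = G a 0 L := by
  rw [G, G, Finset.sum_range_succ]
  have hz : qbin q (((L + 1 : ℕ) : ℤ) + (-1) - ((L+1 : ℕ) : ℤ)) ((L+1 : ℕ) : ℤ) = 0 := by
    apply qbin_zero'; push_cast; omega
  rw [hz, mul_zero, add_zero]
  apply Finset.sum_congr rfl
  intro t _
  congr 2
  push_cast; ring

lemma Gstep (a : ℤ) (L : ℕ) : G a 0 (L + 1) = G a 0 L + q ^ ((L : ℤ) + a) * G a (-1) L := by
  have step1 : ∀ t ∈ Finset.range (L + 2),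
      q ^ ((t : ℤ) ^ 2 + a * t) * qbin q (((L + 1 : ℕ) : ℤ) + 0 - t) t
      = q ^ ((t : ℤ) ^ 2 + a * t) * qbin q ((L : ℤ) + 0 - t) t
        + q ^ ((t : ℤ) ^ 2 + a * t) * (q ^ ((L : ℤ) + 1 - 2 * t) * qbin q ((L : ℤ) - t) ((t : ℤ) - 1)) := by
    intro t ht
    simp only [Finset.mem_range] at ht
    have hc : (1 : ℤ) ≤ ((L : ℤ) + 1 - t) ∨ ((L : ℤ) + 1 - t) < t ∨ (t : ℤ) < 0 := by omega
    have hp := pascal ((L : ℤ) + 1 - t) t hc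
    have e1 : ((L + 1 : ℕ) : ℤ) + 0 - t = (L : ℤ) + 1 - t := by push_cast; ring
    have e2 : (L : ℤ) + 1 - t - 1 = (L : ℤ) + 0 - t := by ring
    have e3 : (L : ℤ) + 1 - t - t = (L : ℤ) + 1 - 2 * t := by ring
    rw [e1, hp, e2, e3, mul_add]
    rw [show (L : ℤ) + 0 - t = (L : ℤ) - t by ring]
  rw [show G a 0 (L + 1) = ∑ t ∈ Finset.range (L + 2),
        q ^ ((t : ℤ) ^ 2 + a * t) * qbin q (((L + 1 : ℕ) : ℤ) + 0 - t) t from rfl]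
  rw [Finset.sum_congr rfl step1, Finset.sum_add_distrib]
  congr 1
  · -- first sum: drop t = L+1 term
    rw [Finset.sum_range_succ]
    have hz : qbin q ((L : ℤ) + 0 - ((L + 1 : ℕ) : ℤ)) ((L + 1 : ℕ) : ℤ) = 0 := by
      apply qbin_zero'; push_cast; omega
    rw [hz, mul_zero, add_zero, G]
  · -- second sum: peel t = 0, reindex
    rw [Finset.sum_range_succ']
    have hz0 : q ^ (((0:ℕ):ℤ) ^ 2 + a * ((0:ℕ):ℤ)) *
        (q ^ ((L:ℤ) + 1 - 2 * ((0:ℕ):ℤ)) * qbin q ((L:ℤ) - ((0:ℕ):ℤ)) (((0:ℕ):ℤ) - 1)) = 0 := by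
      rw [qbin_zero' q _ _ (by omega)]; ring
    rw [hz0, add_zero, G, Finset.mul_sum]
    apply Finset.sum_congr rfl
    intro s _
    simp only [← mul_assoc, ← zpow_add₀ q_ne_zero]
    rw [show ((s + 1 : ℕ) : ℤ) ^ 2 + a * ((s + 1 : ℕ) : ℤ) + ((L : ℤ) + 1 - 2 * ((s + 1 : ℕ) : ℤ))
        = (L : ℤ) + a + ((s : ℤ) ^ 2 + a * s) by push_cast; ring]
    rw [show (L : ℤ) - ((s + 1 : ℕ) : ℤ) = (L : ℤ) + (-1) - (s : ℤ) by push_cast; ring]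
    rw [show ((s + 1 : ℕ) : ℤ) - 1 = ((s : ℕ) : ℤ) by push_cast; ring]

/- ======================= connectors ======================= -/

lemma eN_q (N : ℕ) : eN q N = G 0 0 N := by
  apply Finset.sum_congr rfl
  intro t _
  rw [← zpow_natCast q (t ^ 2),
    show (((t ^ 2 : ℕ)) : ℤ) = (t : ℤ) ^ 2 + 0 * t by push_cast; ring,
    show (N : ℤ) - t = (N : ℤ) + 0 - t by ring]

lemma dN_q (N : ℕ) : dN q N = G 1 (-1) N := by
  apply Finset.sum_congr rfl
  intro t _
  rw [← zpow_natCast q (t ^ 2 + t),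
    show (((t ^ 2 + t : ℕ)) : ℤ) = (t : ℤ) ^ 2 + 1 * t by push_cast; ring,
    show (N : ℤ) - t - 1 = (N : ℤ) + (-1) - t by ring]

lemma eN_inv (M : ℕ) : eN q⁻¹ M = G (-(M : ℤ)) 0 M := by
  apply Finset.sum_congr rfl
  intro t _
  rw [qbin_inv, inv_pow, ← zpow_natCast q (t ^ 2), ← zpow_neg]
  simp only [← mul_assoc, ← zpow_add₀ q_ne_zero]
  rw [show -((t ^ 2 : ℕ) : ℤ) + -((t : ℤ) * ((M : ℤ) - t - t)) =
      (t : ℤ) ^ 2 + -(M : ℤ) * t by push_cast; ring,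
    show (M : ℤ) - t = (M : ℤ) + 0 - t by ring]

lemma dN_inv (M : ℕ) : dN q⁻¹ M = G (-(M : ℤ)) (-1) M := by
  apply Finset.sum_congr rfl
  intro t _
  rw [qbin_inv, inv_pow, ← zpow_natCast q (t ^ 2 + t), ← zpow_neg]
  simp only [← mul_assoc, ← zpow_add₀ q_ne_zero]
  rw [show -((t ^ 2 + t : ℕ) : ℤ) + -((t : ℤ) * ((M : ℤ) - t - 1 - t)) =
      (t : ℤ) ^ 2 + -(M : ℤ) * t by push_cast; ring,
    show (M : ℤ) - t - 1 = (M : ℤ) + (-1) - t by ring]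

lemma eN_zero : eN q 0 = 1 := by
  rw [eN, Finset.sum_range_one]
  norm_num
  rw [qbin_k_zero 0 le_rfl]

lemma dN_zero : dN q 0 = 0 := by
  rw [dN, Finset.sum_range_one]
  norm_num
  rw [qbin_zero' q _ _ (by omega)]

lemma eN_one : eN q 1 = 1 := by
  rw [eN, Finset.sum_range_succ, Finset.sum_range_one]
  norm_num
  rw [qbin_k_zero 1 (by omega), qbin_zero' q _ _ (by norm_num)]
  norm_num

lemma dN_one : dN q 1 = 1 := by
  rw [dN, Finset.sum_range_succ, Finset.sum_range_one]
  norm_num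
  rw [qbin_k_zero 0 le_rfl, qbin_zero' q _ _ (by norm_num)]
  norm_num

lemma eN_rec (N : ℕ) : eN q (N + 2) = eN q (N + 1) + q ^ ((N : ℤ) + 1) * eN q N := by
  rw [eN_q, eN_q, eN_q, show N + 2 = (N + 1) + 1 from rfl, Gstep 0 (N + 1), Gshift 0 N,
    show ((N + 1 : ℕ) : ℤ) + 0 = (N : ℤ) + 1 by push_cast; ring]

lemma dN_rec (N : ℕ) : dN q (N + 2) = dN q (N + 1) + q ^ ((N : ℤ) + 1) * dN q N := by
  rw [dN_q, dN_q, dN_q, show N + 2 = (N + 1) + 1 from rfl, Gshift 1 (N + 1), Gstep 1 N,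
    ← Gshift 1 N, show ((N : ℕ) : ℤ) + 1 = (N : ℤ) + 1 from rfl]

/- ======================= main induction ======================= -/

lemma key (M : ℕ) : ∀ n : ℕ,
    G (-(M : ℤ)) 0 (M + n) = eN q⁻¹ M * eN q n + dN q⁻¹ M * dN q n := by
  intro n
  induction n using Nat.strong_induction_on with
  | _ n ih =>
    match n, ih with
    | 0, _ =>
      rw [Nat.add_zero, eN_zero, dN_zero, mul_one, mul_zero, add_zero, eN_inv]
    | 1, _ =>
      rw [Gstep (-(M : ℤ)) M, eN_one, dN_one, mul_one, mul_one, ← eN_inv, ← dN_inv,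
        show (M : ℤ) + -(M : ℤ) = 0 by ring, zpow_zero, one_mul]
    | (k + 2), ih =>
      have h1 := ih (k + 1) (by omega)
      have h0 := ih k (by omega)
      have hstep : G (-(M : ℤ)) 0 (M + (k + 2)) = G (-(M : ℤ)) 0 (M + (k + 1)) +
          q ^ (((M + (k + 1) : ℕ) : ℤ) + -(M : ℤ)) * G (-(M : ℤ)) (-1) (M + (k + 1)) :=
        Gstep _ (M + (k + 1))
      have hsh : G (-(M : ℤ)) (-1) (M + (k + 1)) = G (-(M : ℤ)) 0 (M + k) :=
        Gshift _ (M + k)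
      rw [hstep, hsh, h1, h0,
        show ((M + (k + 1) : ℕ) : ℤ) + -(M : ℤ) = (k : ℤ) + 1 by push_cast; ring,
        eN_rec k, dN_rec k]
      ring

/-- For all integers `L ≥ M ≥ 0`:
`Σ_{t≥0} q^{t²-Mt} qbinom(L-t,t) = e_M(1/q) e_{L-M}(q) + d_M(1/q) d_{L-M}(q)`. -/
theorem stmt6 (L M : ℕ) (h : M ≤ L) :
    ∑ t ∈ Finset.range (L + 1), q ^ ((t : ℤ) ^ 2 - M * t) * qbin q ((L : ℤ) - t) t =
      eN q⁻¹ M * eN q (L - M) + dN q⁻¹ M * dN q (L - M) := by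
  obtain ⟨n, rfl⟩ : ∃ n, L = M + n := ⟨L - M, by omega⟩
  have hL : M + n - M = n := by omega
  rw [hL]
  have hG : ∑ t ∈ Finset.range (M + n + 1), q ^ ((t : ℤ) ^ 2 - M * t) * qbin q (((M + n : ℕ) : ℤ) - t) t
      = G (-(M : ℤ)) 0 (M + n) := by
    apply Finset.sum_congr rfl
    intro t _
    rw [show (t : ℤ) ^ 2 - (M : ℤ) * t = (t : ℤ) ^ 2 + -(M : ℤ) * t by ring,
      show ((M + n : ℕ) : ℤ) - t = ((M + n : ℕ) : ℤ) + 0 - t by ring]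
  rw [hG, key M n]
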